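/- Let V be a graded vector space with a PBW-type basis as above, where exactly m of the bounds Ñ_k are infinite. Then the formal power series H_V(T), viewed as a rational function, has a pole of order exactly m at T = 1; consequently any graded algebra with such a basis has Gelfand-Kirillov dimension equal to m (the number of indices k with Ñ_k = ∞). -/

import Mathlib

/-!
Writing `Eₙ = 1 + T + ⋯ + T^(n-1)` (so `E_∞ = 1/(1-T)`), the Hilbert series is `∏ₖ E_{Ñₖ}(T^{dₖ})`.
A finite factor is a polynomial with value `Ñₖ ≠ 0` at `T = 1`; an infinite one is
`1/(1 - T^{dₖ}) = 1/((1-T)(1 + ⋯ + T^{dₖ-1}))`, a simple pole. Hence the pole at `1` has order `m`.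

For the growth, the exponent vectors of degree `≤ n` contain the box `[0, n/(∑ d + 1)]^m` (zero in
the finite coordinates) and lie in the box `[0, n]^m × ∏_{Ñₖ < ∞} [0, Ñₖ)`, so their number is
`Θ(n^m)` and `log` of it divided by `log n` tends to `m`.
-/

open PowerSeries Finset Filter Topology

section PoleOrder

variable {K : Type*} [CommRing K]

def HasPoleOrderAtOne (H : K⟦X⟧) (m : ℕ) : Prop :=
  ∃ f g : Polynomial K, f.eval 1 ≠ 0 ∧ g.eval 1 ≠ 0 ∧ (g : K⟦X⟧) * (1 - X) ^ m * H = (f : K⟦X⟧)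

theorem hasPoleOrderAtOne_coe [Nontrivial K] {p : Polynomial K} (hp : p.eval 1 ≠ 0) :
    HasPoleOrderAtOne (p : K⟦X⟧) 0 :=
  ⟨p, 1, hp, by simp, by simp⟩

theorem HasPoleOrderAtOne.mul [IsDomain K] {H₁ H₂ : K⟦X⟧} {m₁ m₂ : ℕ}
    (h₁ : HasPoleOrderAtOne H₁ m₁) (h₂ : HasPoleOrderAtOne H₂ m₂) :
    HasPoleOrderAtOne (H₁ * H₂) (m₁ + m₂) := by
  obtain ⟨f₁, g₁, hf₁, hg₁, e₁⟩ := h₁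
  obtain ⟨f₂, g₂, hf₂, hg₂, e₂⟩ := h₂
  refine ⟨f₁ * f₂, g₁ * g₂, by simp [hf₁, hf₂], by simp [hg₁, hg₂], ?_⟩
  rw [Polynomial.coe_mul, Polynomial.coe_mul, ← e₁, ← e₂]
  ring

theorem hasPoleOrderAtOne_prod [IsDomain K] {ι : Type*} (s : Finset ι) {H : ι → K⟦X⟧}
    {m : ι → ℕ} (h : ∀ i ∈ s, HasPoleOrderAtOne (H i) (m i)) :
    HasPoleOrderAtOne (∏ i ∈ s, H i) (∑ i ∈ s, m i) := by
  classical
  induction s using Finset.induction_on with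
  | empty => simpa using hasPoleOrderAtOne_coe (p := (1 : Polynomial K)) (by simp)
  | insert i s hi ih =>
    rw [prod_insert hi, sum_insert hi]
    exact (h i (mem_insert_self i s)).mul (ih fun j hj => h j (mem_insert_of_mem hj))

theorem hasPoleOrderAtOne_expand_mk_one [CharZero K] {d : ℕ} (hd : d ≠ 0) :
    HasPoleOrderAtOne (expand d hd (PowerSeries.mk 1 : K⟦X⟧)) 1 := by
  refine ⟨1, ∑ j ∈ range d, Polynomial.X ^ j, by simp, by simpa using hd, ?_⟩
  have hg : ((∑ j ∈ range d, Polynomial.X ^ j : Polynomial K) : K⟦X⟧) * (1 - X) = 1 - X ^ d := by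
    rw [← Polynomial.coeToPowerSeries.ringHom_apply, map_sum]
    simpa using geom_sum_mul_neg (X : K⟦X⟧) d
  rw [pow_one, hg, ← expand_X d hd, ← map_one (expand d hd), ← map_sub, ← map_mul,
    mul_comm, mk_one_mul_one_sub_eq_one, map_one, Polynomial.coe_one]

end PoleOrder

section HilbertSeries

def truncGeomSeries (K : Type*) [Semiring K] (N : ℕ∞) : K⟦X⟧ :=
  PowerSeries.mk fun j => if (j : ℕ∞) < N then 1 else 0

theorem truncGeomSeries_top (K : Type*) [Semiring K] :
    truncGeomSeries K ⊤ = PowerSeries.mk 1 := by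
  ext j
  simp [truncGeomSeries]

theorem truncGeomSeries_natCast (K : Type*) [Semiring K] (n : ℕ) :
    truncGeomSeries K n = ((∑ j ∈ range n, Polynomial.X ^ j : Polynomial K) : K⟦X⟧) := by
  ext j
  simp [truncGeomSeries, Polynomial.coeff_X_pow]

theorem expand_truncGeomSeries_natCast (K : Type*) [CommRing K] {d : ℕ} (hd : d ≠ 0) (n : ℕ) :
    expand d hd (truncGeomSeries K n) =
      ((∑ j ∈ range n, (Polynomial.X ^ d) ^ j : Polynomial K) : K⟦X⟧) := by
  rw [truncGeomSeries_natCast, ← Polynomial.coeToPowerSeries.ringHom_apply, map_sum, map_sum,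
    ← Polynomial.coeToPowerSeries.ringHom_apply, map_sum]
  simp

theorem hasPoleOrderAtOne_expand_truncGeomSeries (K : Type*) [CommRing K] [CharZero K]
    {N : ℕ∞} (hN : N ≠ 0) {d : ℕ} (hd : d ≠ 0) :
    HasPoleOrderAtOne (expand d hd (truncGeomSeries K N)) (if N = ⊤ then 1 else 0) := by
  induction N using ENat.recTopCoe with
  | top => simpa [truncGeomSeries_top] using hasPoleOrderAtOne_expand_mk_one hd
  | coe n =>
    rw [if_neg (ENat.natCast_ne_top n), expand_truncGeomSeries_natCast]
    exact hasPoleOrderAtOne_coe (by simpa [Polynomial.eval_finsetSum] using hN)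

theorem hasPoleOrderAtOne_prod_expand_truncGeomSeries (K : Type*) [CommRing K] [IsDomain K]
    [CharZero K] {ι : Type*} [Fintype ι] {N : ι → ℕ∞} (hN : ∀ i, N i ≠ 0) {d : ι → ℕ}
    (hd : ∀ i, 0 < d i) :
    HasPoleOrderAtOne (∏ i, expand (d i) (hd i).ne' (truncGeomSeries K (N i)))
      #{i | N i = ⊤} := by
  rw [card_filter]
  exact hasPoleOrderAtOne_prod _ fun i _ =>
    hasPoleOrderAtOne_expand_truncGeomSeries K (hN i) (hd i).ne'

variable {ι : Type*} [Fintype ι] [DecidableEq ι]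

theorem card_sum_mul_eq_card_filter_finsuppAntidiag (p : ι → ℕ → Prop)
    [∀ i, DecidablePred (p i)] {d : ι → ℕ} (hd : ∀ i, 0 < d i) (n : ℕ) :
    Nat.card {h : ι → ℕ // (∀ i, p i (h i)) ∧ ∑ i, h i * d i = n} =
      #{l ∈ univ.finsuppAntidiag n | ∀ i, d i ∣ l i ∧ p i (l i / d i)} := by
  rw [← Nat.card_eq_finsetCard]
  refine Nat.card_congr
    { toFun h := ⟨Finsupp.equivFunOnFinite.symm fun i => h.1 i * d i, ?_⟩
      invFun l := ⟨fun i => l.1 i / d i, ?_⟩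
      left_inv h := ?_
      right_inv l := ?_ }
  · simp [mem_finsuppAntidiag, Nat.mul_div_cancel _ (hd _), h.2.1, h.2.2]
  · obtain ⟨l, hl⟩ := l
    simp only [mem_filter, mem_finsuppAntidiag] at hl
    refine ⟨fun i => (hl.2 i).2, ?_⟩
    simpa [Nat.div_mul_cancel (hl.2 _).1] using hl.1.1
  · ext i
    simp [Nat.mul_div_cancel _ (hd i)]
  · obtain ⟨l, hl⟩ := l
    simp only [mem_filter] at hl
    ext i
    simp [Nat.div_mul_cancel (hl.2 i).1]

theorem coeff_prod_expand_mk_ite {R : Type*} [CommRing R] (p : ι → ℕ → Prop)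
    [∀ i, DecidablePred (p i)] {d : ι → ℕ} (hd : ∀ i, 0 < d i) (n : ℕ) :
    coeff n (∏ i, expand (d i) (hd i).ne'
        (PowerSeries.mk fun j => if p i j then (1 : R) else 0)) =
      Nat.card {h : ι → ℕ // (∀ i, p i (h i)) ∧ ∑ i, h i * d i = n} := by
  simp only [coeff_prod, coeff_expand, PowerSeries.coeff_mk, ← ite_and, Fintype.prod_boole,
    sum_boole, card_sum_mul_eq_card_filter_finsuppAntidiag p hd]

end HilbertSeries

section Growth

theorem sum_range_card_fiber_eq_card {α : Type*} (P : α → Prop) (f : α → ℕ) (n : ℕ)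
    (hfin : {x | P x ∧ f x ≤ n}.Finite) :
    ∑ j ∈ range (n + 1), Nat.card {x // P x ∧ f x = j} = Nat.card {x // P x ∧ f x ≤ n} := by
  classical
  have hfiber : ∀ j ∈ range (n + 1),
      Nat.card {x // P x ∧ f x = j} = #{x ∈ hfin.toFinset | f x = j} := by
    intro j hj
    rw [← Nat.card_eq_finsetCard]
    refine Nat.card_congr (Equiv.subtypeEquivRight fun x => ?_)
    simp only [mem_filter, Set.Finite.mem_toFinset, Set.mem_ofPred_eq]
    have hjn := mem_range_succ_iff.mp hj
    constructor
    · rintro ⟨hx, rfl⟩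
      exact ⟨⟨hx, hjn⟩, rfl⟩
    · rintro ⟨⟨hx, -⟩, rfl⟩
      exact ⟨hx, rfl⟩
  rw [sum_congr rfl hfiber, ← card_eq_sum_card_fiberwise]
  · exact (Nat.card_eq_card_finite_toFinset hfin).symm
  · intro x hx
    simpa [Nat.lt_succ_iff] using (hfin.mem_toFinset.mp hx).2

theorem tendsto_log_div_log_of_le_of_le {a : ℕ → ℝ} {r c C : ℝ} (hc : 0 < c)
    (hlow : ∀ᶠ n : ℕ in atTop, c * (n : ℝ) ^ r ≤ a n)
    (hup : ∀ᶠ n : ℕ in atTop, a n ≤ C * (n : ℝ) ^ r) :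
    Tendsto (fun n : ℕ => Real.log (a n) / Real.log n) atTop (𝓝 r) := by
  have hlim (b : ℝ) : Tendsto (fun n : ℕ => r + Real.log b / Real.log n) atTop (𝓝 r) := by
    simpa using tendsto_const_nhds.add <| tendsto_const_nhds.div_atTop <|
      Real.tendsto_log_atTop.comp tendsto_natCast_atTop_atTop
  have hlog {b : ℝ} (hb : 0 < b) {n : ℕ} (hn : 1 < n) :
      Real.log (b * (n : ℝ) ^ r) / Real.log n = r + Real.log b / Real.log n := by
    have hlogn : 0 < Real.log n := Real.log_pos (by exact_mod_cast hn)
    rw [Real.log_mul hb.ne' (by positivity), Real.log_rpow (by positivity)]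
    field_simp
    ring
  refine tendsto_of_tendsto_of_tendsto_of_le_of_le' (hlim c) (hlim C) ?_ ?_
  · filter_upwards [hlow, eventually_gt_atTop 1] with n hlo hn
    rw [← hlog hc hn]
    gcongr
  · filter_upwards [hlow, hup, eventually_gt_atTop 1] with n hlo hup hn
    have hnr : 0 < (n : ℝ) ^ r := by positivity
    have hC : 0 < C := pos_of_mul_pos_left ((mul_pos hc hnr).trans_le (hlo.trans hup)) hnr.le
    have ha : 0 < a n := (mul_pos hc hnr).trans_le hlo
    rw [← hlog hC hn]
    gcongr

variable {ι : Type*} [Fintype ι] (N : ι → ℕ∞) (d : ι → ℕ)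

def pbwBasisDegLE (n : ℕ) : Set (ι → ℕ) :=
  {h | (∀ i, (h i : ℕ∞) < N i) ∧ ∑ i, h i * d i ≤ n}

variable {N d}

theorem pbwBasisDegLE_subset_piFinset [DecidableEq ι] (hd : ∀ i, 0 < d i) (n : ℕ) :
    pbwBasisDegLE N d n ⊆
      Fintype.piFinset fun i => range (if N i = ⊤ then n + 1 else (N i).toNat) := by
  intro h ⟨hlt, hsum⟩
  simp only [Fintype.coe_piFinset, Set.mem_pi, Set.mem_univ, coe_range, Set.mem_Iio,
    forall_const]
  intro i
  split_ifs with hi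
  · have : h i * d i ≤ ∑ j, h j * d j :=
      single_le_sum (f := fun j => h j * d j) (fun j _ => Nat.zero_le _) (mem_univ i)
    have := Nat.le_mul_of_pos_right (h i) (hd i)
    omega
  · simpa [← ENat.natCast_lt_natCast, ENat.natCast_toNat hi] using hlt i

theorem pbwBasisDegLE_finite (hd : ∀ i, 0 < d i) (n : ℕ) : (pbwBasisDegLE N d n).Finite := by
  classical exact (Finset.finite_toSet _).subset (pbwBasisDegLE_subset_piFinset hd n)

theorem ncard_pbwBasisDegLE_le (hd : ∀ i, 0 < d i) (n : ℕ) :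
    (pbwBasisDegLE N d n).ncard ≤ (n + 1) ^ #{i | N i = ⊤} * ∏ i with N i ≠ ⊤, (N i).toNat := by
  classical
  calc (pbwBasisDegLE N d n).ncard
      ≤ (↑(Fintype.piFinset fun i => range (if N i = ⊤ then n + 1 else (N i).toNat)) :
          Set (ι → ℕ)).ncard := Set.ncard_le_ncard (pbwBasisDegLE_subset_piFinset hd n)
    _ = _ := by
        rw [Set.ncard_coe_finset, Fintype.card_piFinset]
        simp [prod_ite]

theorem piFinset_subset_pbwBasisDegLE [DecidableEq ι] (hN : ∀ i, N i ≠ 0) (n : ℕ) :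
    (Fintype.piFinset fun i => if N i = ⊤ then range (n / (∑ i, d i + 1) + 1) else {0} :
      Set (ι → ℕ)) ⊆ pbwBasisDegLE N d n := by
  set q := n / (∑ i, d i + 1)
  intro h hh
  simp only [Fintype.coe_piFinset, Set.mem_pi, Set.mem_univ, forall_const] at hh
  have hle : ∀ i, h i ≤ q := fun i => by
    specialize hh i
    split_ifs at hh <;> simp_all
  refine ⟨fun i => ?_, ?_⟩
  · specialize hh i
    split_ifs at hh with hi
    · simp [hi]
    · rw [mem_coe, mem_singleton] at hh
      simpa [hh] using pos_iff_ne_zero.mpr (hN i)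
  · calc ∑ i, h i * d i ≤ ∑ i, q * d i := sum_le_sum fun i _ => Nat.mul_le_mul_right _ (hle i)
      _ ≤ q * (∑ i, d i + 1) := by rw [← mul_sum, mul_add_one]; exact Nat.le_add_right _ _
      _ ≤ n := Nat.div_mul_le_self n _

theorem le_ncard_pbwBasisDegLE (hN : ∀ i, N i ≠ 0) (hd : ∀ i, 0 < d i) (n : ℕ) :
    (n / (∑ i, d i + 1) + 1) ^ #{i | N i = ⊤} ≤ (pbwBasisDegLE N d n).ncard := by
  classical
  calc (n / (∑ i, d i + 1) + 1) ^ #{i | N i = ⊤}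
      = (↑(Fintype.piFinset fun i =>
          if N i = ⊤ then range (n / (∑ i, d i + 1) + 1) else {0}) : Set (ι → ℕ)).ncard := by
        rw [Set.ncard_coe_finset, Fintype.card_piFinset]
        simp only [apply_ite Finset.card, card_range, card_singleton]
        rw [prod_ite, prod_const, prod_const_one, mul_one]
    _ ≤ _ := Set.ncard_le_ncard (piFinset_subset_pbwBasisDegLE hN n) (pbwBasisDegLE_finite hd n)

theorem tendsto_log_ncard_pbwBasisDegLE (hN : ∀ i, N i ≠ 0) (hd : ∀ i, 0 < d i) :
    Tendsto (fun n : ℕ => Real.log ((pbwBasisDegLE N d n).ncard : ℝ) / Real.log n) atTop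
      (𝓝 (#{i | N i = ⊤} : ℝ)) := by
  set m := #{i | N i = ⊤}
  set s : ℕ := ∑ i, d i + 1
  refine tendsto_log_div_log_of_le_of_le (c := ((s : ℝ) ^ m)⁻¹)
    (C := 2 ^ m * ∏ i with N i ≠ ⊤, ((N i).toNat : ℝ)) (by positivity) ?_ ?_
  · refine Eventually.of_forall fun n => ?_
    have hq : (n : ℝ) / s ≤ (n / s : ℕ) + 1 := by
      rw [← Nat.floor_div_eq_div (K := ℝ)]
      exact (Nat.lt_floor_add_one _).le
    calc ((s : ℝ) ^ m)⁻¹ * (n : ℝ) ^ (m : ℝ) = ((n : ℝ) / s) ^ m := by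
          rw [Real.rpow_natCast, div_pow, inv_mul_eq_div]
      _ ≤ (((n / s : ℕ) : ℝ) + 1) ^ m := by gcongr
      _ ≤ (pbwBasisDegLE N d n).ncard := by exact_mod_cast le_ncard_pbwBasisDegLE hN hd n
  · filter_upwards [eventually_ge_atTop 1] with n hn
    have h2n : (n : ℝ) + 1 ≤ 2 * n := by
      have : (1 : ℝ) ≤ n := by exact_mod_cast hn
      linarith
    calc ((pbwBasisDegLE N d n).ncard : ℝ)
        ≤ ((n : ℝ) + 1) ^ m * ∏ i with N i ≠ ⊤, ((N i).toNat : ℝ) := by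
          exact_mod_cast ncard_pbwBasisDegLE_le hd n
      _ ≤ (2 * n) ^ m * ∏ i with N i ≠ ⊤, ((N i).toNat : ℝ) := by gcongr
      _ = _ := by rw [Real.rpow_natCast, mul_pow]; ring

end Growth

/-- For a graded vector space with a PBW-type basis indexed by tuples `(h₁,…,h_M)` with
`0 ≤ h_k < N̄_k ∈ ℕ ∪ {∞}` and degrees `∑ h_k d_k`, where exactly `m` of the bounds are
infinite, the Hilbert series has a pole of order exactly `m` at `T = 1`, and the
Gelfand–Kirillov dimension (computed from the dimension growth) equals `m`. -/
theorem hilbert_series_pole_order_gkdim (M : ℕ) (Nbar : Fin M → ℕ∞)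
    (hNbar : ∀ i, Nbar i ≠ 0) (d : Fin M → ℕ) (hd : ∀ i, 0 < d i)
    (m : ℕ) (hm : m = (Finset.univ.filter fun i => Nbar i = ⊤).card)
    (D : ℕ → ℕ)
    (hD : ∀ n : ℕ, D n =
      Nat.card {h : Fin M → ℕ //
        (∀ i, (h i : ℕ∞) < Nbar i) ∧ ∑ i, h i * d i = n}) :
    (∃ f g : Polynomial ℚ, Polynomial.eval 1 f ≠ 0 ∧ Polynomial.eval 1 g ≠ 0 ∧
      (g : PowerSeries ℚ) * (1 - (PowerSeries.X : PowerSeries ℚ)) ^ m *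
        PowerSeries.mk (fun n => (D n : ℚ)) = (f : PowerSeries ℚ)) ∧
    Filter.atTop.limsup
      (fun n : ℕ =>
        Real.log (∑ i ∈ Finset.range (n + 1), (D i : ℝ)) / Real.log n) = (m : ℝ) := by
  have hH : PowerSeries.mk (fun n => (D n : ℚ)) =
      ∏ i, expand (d i) (hd i).ne' (truncGeomSeries ℚ (Nbar i)) := by
    ext n
    rw [PowerSeries.coeff_mk, hD]
    exact (coeff_prod_expand_mk_ite (fun i j => (j : ℕ∞) < Nbar i) hd n).symm
  have hcum (n : ℕ) : ∑ i ∈ range (n + 1), (D i : ℝ) = (pbwBasisDegLE Nbar d n).ncard := by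
    simp only [hD]
    exact_mod_cast sum_range_card_fiber_eq_card _ _ n (pbwBasisDegLE_finite hd n)
  refine ⟨?_, ?_⟩
  · rw [hH, hm]
    exact hasPoleOrderAtOne_prod_expand_truncGeomSeries ℚ hNbar hd
  · simp only [hcum]
    exact (hm ▸ tendsto_log_ncard_pbwBasisDegLE hNbar hd).limsup_eq
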